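/- arXiv:2104.12773 — 2 statements merged into one kernel-verified Lean document; each statement's English description precedes it below -/
import Mathlib

section
/- Let (M, ḡ) be a compact Riemannian manifold without boundary, A a smooth function, Λ a real constant, and T a smooth function. If Λ − (1/(D−2)) e^{−(D−2)A} Δ̄(e^{(D−2)A}) = T pointwise, then Λ ∫_M e^{(D−2)A} dvol = ∫_M e^{(D−2)A} T dvol. In particular, if T ≤ 0 everywhere and T is not identically zero, then Λ < 0. -/
/-!
Multiplying the equation by `u = e^{(D-2)A}` gives `Δ̄u = (D-2) u (Λ - T)`; integrating and using
`∫ Δ̄u = 0` yields `Λ ∫ u = ∫ u T`. For the sign, `∫ u > 0` while `∫ u T < 0`, since `u T` is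
continuous, nonpositive and nonzero somewhere, and nonempty open sets have positive measure.
-/

open MeasureTheory

lemma eq_mul_mul_sub_of_sub_one_div_mul_inv_mul_eq {c u L Λ t : ℝ} (hc : c ≠ 0) (hu : u ≠ 0)
    (h : Λ - 1 / c * u⁻¹ * L = t) : L = c * (u * (Λ - t)) := by
  rw [← h]
  field_simp
  ring

section Integrals

variable {α : Type*} [MeasurableSpace α] {μ : Measure α}

theorem mul_integral_eq_integral_mul_of_integral_eq_zero {u T L : α → ℝ} {c Λ : ℝ} (hc : c ≠ 0)
    (hu : Integrable u μ) (huT : Integrable (fun x => u x * T x) μ)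
    (hL : ∀ x, L x = c * (u x * (Λ - T x))) (hL0 : ∫ x, L x ∂μ = 0) :
    Λ * ∫ x, u x ∂μ = ∫ x, u x * T x ∂μ := by
  have hL_expand : ∫ x, L x ∂μ = c * (Λ * ∫ x, u x ∂μ - ∫ x, u x * T x ∂μ) := by
    simp only [hL]
    rw [integral_const_mul]
    simp_rw [mul_sub]
    rw [integral_sub (hu.mul_const Λ) huT, integral_mul_const]
    ring
  rw [hL_expand] at hL0
  exact sub_eq_zero.mp ((mul_eq_zero.mp hL0).resolve_left hc)

theorem neg_of_mul_integral_eq_integral_mul [TopologicalSpace α] [μ.IsOpenPosMeasure]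
    {u T : α → ℝ} {Λ : ℝ} {x₀ : α} (hu_cont : Continuous u) (hT_cont : Continuous T)
    (hu_pos : ∀ x, 0 < u x) (hT_nonpos : ∀ x, T x ≤ 0) (hT_ne : T x₀ ≠ 0)
    (hu : Integrable u μ) (huT : Integrable (fun x => u x * T x) μ)
    (h : Λ * ∫ x, u x ∂μ = ∫ x, u x * T x ∂μ) : Λ < 0 := by
  have hu_int_pos : 0 < ∫ x, u x ∂μ :=
    integral_pos_of_integrable_nonneg_nonzero hu_cont hu (fun x => (hu_pos x).le)
      (hu_pos x₀).ne'
  have huT_int_neg : ∫ x, u x * T x ∂μ < 0 := by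
    have : 0 < ∫ x, -(u x * T x) ∂μ :=
      integral_pos_of_integrable_nonneg_nonzero (hu_cont.mul hT_cont).neg huT.neg
        (fun x => neg_nonneg.mpr (mul_nonpos_of_nonneg_of_nonpos (hu_pos x).le (hT_nonpos x)))
        (neg_ne_zero.mpr (mul_ne_zero (hu_pos x₀).ne' hT_ne))
    rwa [integral_neg, neg_pos] at this
  exact neg_of_mul_neg_left (h ▸ huT_int_neg) hu_int_pos.le

end Integrals

theorem integrated_external_equation_general
    {M : Type*} [MeasurableSpace M] [TopologicalSpace M]
    (vol : Measure M) [vol.IsOpenPosMeasure]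
    {V : Type*}
    (smooth : (M → ℝ) → Prop)
    (grad : (M → ℝ) → M → V) (dvg : (M → V) → M → ℝ)
    -- divergence theorem on the compact manifold without boundary
    (hdivthm : ∀ u : M → ℝ, smooth u → ∫ x, dvg (grad u) x ∂vol = 0)
    (D : ℕ) (hD : 2 < D) (A : M → ℝ) (hAcont : Continuous A)
    (hexp : smooth fun y => Real.exp (((D : ℝ) - 2) * A y))
    (Λ : ℝ) (T : M → ℝ) (hT : Continuous T)
    (hint : Integrable (fun x => Real.exp (((D : ℝ) - 2) * A x) * T x) vol)
    (hint' : Integrable (fun x => Real.exp (((D : ℝ) - 2) * A x)) vol)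
    (heq : ∀ x : M, Λ - (1 / ((D : ℝ) - 2)) * Real.exp (-(((D : ℝ) - 2) * A x))
        * dvg (grad (fun y => Real.exp (((D : ℝ) - 2) * A y))) x = T x) :
    Λ * (∫ x, Real.exp (((D : ℝ) - 2) * A x) ∂vol)
        = ∫ x, Real.exp (((D : ℝ) - 2) * A x) * T x ∂vol
    ∧ ((∀ x, T x ≤ 0) → T ≠ 0 → Λ < 0) := by
  have hc : (D : ℝ) - 2 ≠ 0 := sub_ne_zero.mpr (by exact_mod_cast hD.ne')
  have hdvg : ∀ x, dvg (grad (fun y => Real.exp (((D : ℝ) - 2) * A y))) x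
      = ((D : ℝ) - 2) * (Real.exp (((D : ℝ) - 2) * A x) * (Λ - T x)) := fun x =>
    eq_mul_mul_sub_of_sub_one_div_mul_inv_mul_eq hc (Real.exp_ne_zero _)
      (by rw [← Real.exp_neg]; exact heq x)
  have hidentity := mul_integral_eq_integral_mul_of_integral_eq_zero hc hint' hint hdvg
    (hdivthm _ hexp)
  refine ⟨hidentity, fun hT_nonpos hT_ne => ?_⟩
  obtain ⟨x₀, hx₀⟩ := Function.ne_iff.mp hT_ne
  exact neg_of_mul_integral_eq_integral_mul (by fun_prop) hT (fun x => Real.exp_pos _)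
    hT_nonpos hx₀ hint' hint hidentity

/-- on a compact Riemannian manifold without boundary (abstracted by a
measure `vol` and gradient/divergence operators with `∫ Δ̄u dvol = 0` for smooth `u`),
if `Λ − (1/(D−2)) e^{−(D−2)A} Δ̄(e^{(D−2)A}) = T` pointwise, then
`Λ ∫ e^{(D−2)A} dvol = ∫ e^{(D−2)A} T dvol`; in particular, if `T ≤ 0` everywhere and
`T` is not identically zero, then `Λ < 0`. -/
theorem integrated_external_equation
    {M : Type*} [MeasurableSpace M] [TopologicalSpace M] [OpensMeasurableSpace M]
    (vol : Measure M) [vol.IsOpenPosMeasure] [IsFiniteMeasure vol]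
    {V : Type*} [NormedAddCommGroup V] [InnerProductSpace ℝ V]
    (smooth : (M → ℝ) → Prop)
    (grad : (M → ℝ) → M → V) (dvg : (M → V) → M → ℝ)
    -- divergence theorem on the compact manifold without boundary
    (hdivthm : ∀ u : M → ℝ, smooth u → ∫ x, dvg (grad u) x ∂vol = 0)
    (D : ℕ) (hD : 2 < D) (A : M → ℝ) (hA : smooth A) (hAcont : Continuous A)
    (hexp : smooth fun y => Real.exp (((D : ℝ) - 2) * A y))
    (Λ : ℝ) (T : M → ℝ) (hT : Continuous T)
    (hint : Integrable (fun x => Real.exp (((D : ℝ) - 2) * A x) * T x) vol)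
    (hint' : Integrable (fun x => Real.exp (((D : ℝ) - 2) * A x)) vol)
    (heq : ∀ x : M, Λ - (1 / ((D : ℝ) - 2)) * Real.exp (-(((D : ℝ) - 2) * A x))
        * dvg (grad (fun y => Real.exp (((D : ℝ) - 2) * A y))) x = T x) :
    Λ * (∫ x, Real.exp (((D : ℝ) - 2) * A x) ∂vol)
        = ∫ x, Real.exp (((D : ℝ) - 2) * A x) * T x ∂vol
    ∧ ((∀ x, T x ≤ 0) → T ≠ 0 → Λ < 0) :=
  integrated_external_equation_general vol smooth grad dvg hdivthm D hD A hAcont hexp Λ T hT hint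
    hint' heq
end

section
/- Let V be an n-dimensional real inner product space and F a k-form on V decomposed as contributions f_i and (in an orthogonal complement construction) f_e. Then the tensor f_i)_m·(f_i)_n − (f_e)_m·(f_e)_n + g_{mn} f_e² equals (f_i)_m·(f_i)_n + (⋆f_e)_m·(⋆f_e)_n and is therefore positive semidefinite. -/
/-!
In an orthonormal frame, `(⋆f)_m · (⋆f)_n` is a sum of products of two Levi-Civita symbols
sharing their last `n - j - 1` indices (`j` the degree of `f`); contracting those leaves
`(n - j - 1)!` times the generalized Kronecker delta `det [a_i = b_k]` of the remaining `j + 1`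
indices. Contracting that determinant with `f ⊗ f` and expanding the antisymmetrization along the
free slot gives `g_{mn} f² - f_m · f_n`. (In top degree the delta on `j + 1` indices from a
`j`-element set vanishes, which gives the same identity with `⋆f` a `0`-form.)
Positivity: `∑ X^m X^n f_m · f_n = (1/(j-1)!) ∑_p (X^m f_{m p})² ≥ 0`.
-/

open scoped BigOperators

noncomputable def leviCivita {n : ℕ} (σ : Fin n → Fin n) : ℝ :=
  if h : Function.Bijective σ then ((Equiv.Perm.sign (Equiv.ofBijective σ h) : ℤ) : ℝ) else 0

/-- A coordinate tensor is alternating (components of a form on an oriented inner product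
space, in an orthonormal frame). -/
def IsAlt {n k : ℕ} (F : (Fin k → Fin n) → ℝ) : Prop :=
  ∀ (τ : Equiv.Perm (Fin k)) (m : Fin k → Fin n),
    F (m ∘ τ) = ((Equiv.Perm.sign τ : ℤ) : ℝ) * F m

/-- The square `f² = (1/j!) f_{p₁…p_j} f^{p₁…p_j}`. -/
noncomputable def formSq {n k : ℕ} (F : (Fin k → Fin n) → ℝ) : ℝ :=
  (1 / (Nat.factorial k : ℝ)) * ∑ m : Fin k → Fin n, F m * F m

noncomputable def hodgeStar {n k : ℕ} (h : k ≤ n) (F : (Fin k → Fin n) → ℝ) :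
    (Fin (n - k) → Fin n) → ℝ :=
  fun q => (1 / (Nat.factorial k : ℝ)) *
    ∑ m : Fin k → Fin n,
      leviCivita (Fin.append m q ∘ Fin.cast (Nat.add_sub_cancel' h).symm) * F m

/-- The one-index contraction `(f)_m · (f)_n = (1/(j−1)!) f_{m p…} f_n^{p…}` for a `j`-form,
zero for `0`-forms. -/
noncomputable def formDot {n : ℕ} : {k : ℕ} → ((Fin k → Fin n) → ℝ) → Fin n → Fin n → ℝ
  | 0, _, _, _ => 0
  | (j + 1), F, m, m' => (1 / (Nat.factorial j : ℝ)) *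
      ∑ p : Fin j → Fin n, F (Fin.cons m p) * F (Fin.cons m' p)

open Equiv Function

lemma Equiv.Perm.cast_sign_mul_self {ι : Type*} [Fintype ι] [DecidableEq ι] (σ : Perm ι) :
    (Perm.sign σ : ℝ) * Perm.sign σ = 1 := by
  simp [← Int.cast_mul, ← Units.val_mul]

lemma exists_perm_eq_comp {ι α : Type*} [Finite ι] {a b : ι → α} (ha : Injective a)
    (hab : ∀ i, a i ∈ Set.range b) : ∃ τ : Perm ι, a = b ∘ τ := by
  choose τ hτ using hab
  have hτinj : Injective τ := fun i i' h => ha (by rw [← hτ i, ← hτ i', h])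
  exact ⟨Equiv.ofBijective τ (Finite.injective_iff_bijective.mp hτinj), funext fun i => (hτ i).symm⟩

section LeviCivita

variable {N t u : ℕ}

lemma leviCivita_eq_zero_of_not_injective {c : Fin N → Fin N} (hc : ¬ Injective c) :
    leviCivita c = 0 :=
  dif_neg fun hb => hc hb.1

lemma leviCivita_comp_perm (c : Fin N → Fin N) (σ : Perm (Fin N)) :
    leviCivita (c ∘ σ) = leviCivita c * (Perm.sign σ : ℝ) := by
  by_cases hc : Bijective c
  · have hcσ : Bijective (c ∘ σ) := hc.comp σ.bijective
    rw [leviCivita, dif_pos hcσ, leviCivita, dif_pos hc,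
      show Equiv.ofBijective (c ∘ σ) hcσ = Equiv.ofBijective c hc * σ from Equiv.ext fun _ => rfl,
      map_mul]
    push_cast
    rfl
  · have hcσ : ¬ Bijective (c ∘ σ) := fun h => hc (by simpa using h.comp σ.symm.bijective)
    rw [leviCivita, dif_neg hcσ, leviCivita, dif_neg hc, zero_mul]

lemma leviCivita_mul_self (c : Fin N → Fin N) :
    leviCivita c * leviCivita c = if Injective c then 1 else 0 := by
  unfold leviCivita
  simp only [← Finite.injective_iff_bijective]
  split_ifs <;> simp [Perm.cast_sign_mul_self]

lemma injective_append_comp_cast_iff (hn : t + u = N) (a : Fin t → Fin N) (r : Fin u → Fin N) :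
    Injective (Fin.append a r ∘ Fin.cast hn.symm) ↔
      Injective a ∧ Injective r ∧ ∀ i j, a i ≠ r j :=
  ((finCongr hn.symm).injective_comp _).trans Fin.append_injective_iff

lemma leviCivita_append_comp_perm (hn : t + u = N) (a : Fin t → Fin N) (r : Fin u → Fin N)
    (σ : Perm (Fin t)) :
    leviCivita (Fin.append (a ∘ σ) r ∘ Fin.cast hn.symm) =
      Perm.sign σ * leviCivita (Fin.append a r ∘ Fin.cast hn.symm) := by
  have hσ : Fin.append (a ∘ σ) r ∘ Fin.cast hn.symm = (Fin.append a r ∘ Fin.cast hn.symm) ∘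
      (finCongr hn).permCongr (finSumFinEquiv.permCongr (σ.sumCongr 1)) := by
    ext x
    obtain ⟨y, rfl⟩ := (finCongr hn).surjective x
    induction y using Fin.addCases <;> simp [Equiv.permCongr_apply]
  rw [hσ, leviCivita_comp_perm, Perm.sign_permCongr, Perm.sign_permCongr, Perm.sign_sumCongr,
    Perm.sign_one, mul_one, mul_comm]

lemma mem_range_of_injective_append (hn : t + u = N) {a b : Fin t → Fin N}
    {r : Fin u → Fin N} (ha : Injective (Fin.append a r ∘ Fin.cast hn.symm))
    (hb : Injective (Fin.append b r ∘ Fin.cast hn.symm)) (i : Fin t) : a i ∈ Set.range b := by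
  obtain ⟨x, hx⟩ := (Finite.injective_iff_surjective.mp hb) (a i)
  obtain ⟨y, rfl⟩ := (finCongr hn).surjective x
  induction y using Fin.addCases with
  | left j => exact ⟨j, by simpa using hx⟩
  | right j =>
    exact absurd (by simpa using hx.symm) (((injective_append_comp_cast_iff hn a r).mp ha).2.2 i j)

lemma card_injective_append (hn : t + u = N) {b : Fin t → Fin N} (hb : Injective b) :
    Fintype.card {r : Fin u → Fin N // Injective (Fin.append b r ∘ Fin.cast hn.symm)} =
      u.factorial := by
  let e : {r : Fin u → Fin N // Injective r ∧ ∀ i j, b i ≠ r j} ≃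
      (Fin u ↪ ((Set.range b)ᶜ : Set (Fin N))) :=
    { toFun r := ⟨fun j => ⟨r.1 j, by rintro ⟨i, hi⟩; exact r.2.2 i j hi⟩,
        fun j j' h => r.2.1 (congrArg Subtype.val h)⟩
      invFun f := ⟨fun j => f j, fun j j' h => f.injective (Subtype.ext h),
        fun i j h => (f j).2 ⟨i, h⟩⟩
      left_inv _ := rfl
      right_inv _ := rfl }
  rw [Fintype.card_congr ((Equiv.subtypeEquivRight fun r => by
      rw [injective_append_comp_cast_iff hn, and_iff_right hb]).trans e),
    Fintype.card_embedding_eq, Fintype.card_compl_set, Set.card_range_of_injective hb,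
    Fintype.card_fin, Fintype.card_fin, Fintype.card_fin, ← hn, Nat.add_sub_cancel_left,
    Nat.descFactorial_self]

lemma sum_leviCivita_append_mul_self (hn : t + u = N) {b : Fin t → Fin N} (hb : Injective b) :
    ∑ r : Fin u → Fin N, leviCivita (Fin.append b r ∘ Fin.cast hn.symm) *
      leviCivita (Fin.append b r ∘ Fin.cast hn.symm) = u.factorial := by
  rw [← card_injective_append hn hb, Fintype.card_subtype]
  simp only [leviCivita_mul_self, Finset.sum_boole]

end LeviCivita

section KroneckerMatrix

variable {ι α : Type*} [DecidableEq α]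

/-- The matrix `[a i = b j]`; its determinant is the generalized Kronecker delta `δ^{a}_{b}`. -/
def kroneckerMatrix (a b : ι → α) : Matrix ι ι ℝ :=
  Matrix.of fun i j => if a i = b j then 1 else 0

lemma kroneckerMatrix_self [DecidableEq ι] {b : ι → α} (hb : Injective b) :
    kroneckerMatrix b b = 1 := by
  ext i j
  simp [kroneckerMatrix, Matrix.one_apply, hb.eq_iff]

variable [Fintype ι] [DecidableEq ι]

lemma det_kroneckerMatrix_comp_perm (a b : ι → α) (σ : Perm ι) :
    (kroneckerMatrix (a ∘ σ) b).det = Perm.sign σ * (kroneckerMatrix a b).det :=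
  Matrix.det_permute σ (kroneckerMatrix a b)

lemma det_kroneckerMatrix_comp_equiv {κ : Type*} [Fintype κ] [DecidableEq κ] (a b : ι → α)
    (e : κ ≃ ι) : (kroneckerMatrix (a ∘ e) (b ∘ e)).det = (kroneckerMatrix a b).det :=
  Matrix.det_submatrix_equiv_self e (kroneckerMatrix a b)

lemma det_kroneckerMatrix_eq_zero {a b : ι → α}
    (h : ¬ (Injective a ∧ Injective b ∧ ∀ i, a i ∈ Set.range b)) :
    (kroneckerMatrix a b).det = 0 := by
  simp only [Injective, Set.mem_range, not_and_or, not_forall, not_exists] at h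
  rcases h with ⟨i, i', hi, hne⟩ | ⟨j, j', hj, hne⟩ | ⟨i, hi⟩
  · exact Matrix.det_zero_of_row_eq hne (funext fun _ => by simp [kroneckerMatrix, hi])
  · exact Matrix.det_zero_of_column_eq hne fun _ => by simp [kroneckerMatrix, hj]
  · exact Matrix.det_eq_zero_of_row_eq_zero i fun j => by simp [kroneckerMatrix, Ne.symm (hi j)]

lemma det_kroneckerMatrix_eq_sum (a b : ι → α) :
    (kroneckerMatrix a b).det = ∑ σ : Perm ι, if a ∘ σ = b then (Perm.sign σ : ℝ) else 0 := by
  rw [Matrix.det_apply']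
  refine Finset.sum_congr rfl fun σ _ => ?_
  simp only [kroneckerMatrix, Matrix.of_apply, Finset.prod_boole, Finset.mem_univ, true_implies,
    funext_iff, comp_apply]
  split_ifs <;> simp

end KroneckerMatrix

lemma det_kroneckerMatrix_snoc {α : Type*} [DecidableEq α] {t : ℕ} (a b : Fin t → α) (x y : α) :
    (kroneckerMatrix (Fin.snoc a x : Fin (t + 1) → α) (Fin.snoc b y)).det =
      (kroneckerMatrix (Fin.cons x a : Fin (t + 1) → α) (Fin.cons y b)).det := by
  rw [Fin.snoc_eq_cons_rotate, Fin.snoc_eq_cons_rotate]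
  exact det_kroneckerMatrix_comp_equiv _ _ (finRotate _)

lemma sum_leviCivita_append_mul {N t u : ℕ} (hn : t + u = N) (a b : Fin t → Fin N) :
    ∑ r : Fin u → Fin N, leviCivita (Fin.append a r ∘ Fin.cast hn.symm) *
      leviCivita (Fin.append b r ∘ Fin.cast hn.symm) =
        u.factorial * (kroneckerMatrix a b).det := by
  by_cases hab : Injective a ∧ Injective b ∧ ∀ i, a i ∈ Set.range b
  · obtain ⟨τ, rfl⟩ := exists_perm_eq_comp hab.1 hab.2.2
    simp_rw [leviCivita_append_comp_perm hn, mul_assoc]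
    rw [← Finset.mul_sum, sum_leviCivita_append_mul_self hn hab.2.1, det_kroneckerMatrix_comp_perm,
      kroneckerMatrix_self hab.2.1, Matrix.det_one]
    ring
  · rw [det_kroneckerMatrix_eq_zero hab, mul_zero]
    refine Finset.sum_eq_zero fun r _ => ?_
    by_contra hne
    have hinj (c) (hc : leviCivita (Fin.append c r ∘ Fin.cast hn.symm) ≠ 0) :=
      not_not.mp (mt leviCivita_eq_zero_of_not_injective hc)
    obtain ⟨ha, hb⟩ := (mul_ne_zero_iff.mp hne).imp (hinj a) (hinj b)
    exact hab ⟨((injective_append_comp_cast_iff hn a r).mp ha).1,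
      ((injective_append_comp_cast_iff hn b r).mp hb).1, mem_range_of_injective_append hn ha hb⟩

section Antisymmetrization

variable {α : Type*} {j : ℕ}

lemma Fin.cons_comp_decomposeFin_symm_zero (x : α) (q : Fin j → α) (σ : Perm (Fin j)) :
    (Fin.cons x q : Fin (j + 1) → α) ∘ Perm.decomposeFin.symm (0, σ) = Fin.cons x (q ∘ σ) := by
  ext i
  cases i using Fin.cases <;> simp

lemma Fin.cons_comp_decomposeFin_symm_succ (x : α) (q : Fin j → α) (l : Fin j)
    (σ : Perm (Fin j)) :
    (Fin.cons x q : Fin (j + 1) → α) ∘ Perm.decomposeFin.symm (l.succ, σ) =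
      Fin.cons (q l) (update q l x ∘ σ) := by
  ext i
  cases i using Fin.cases with
  | zero => simp
  | succ i =>
    rcases eq_or_ne (σ i) l with h | h
    · simp [h]
    · simp [swap_apply_of_ne_of_ne (Fin.succ_ne_zero _) (Fin.succ_injective _ |>.ne h), h]

/-- Expansion of an antisymmetrization along the first slot. -/
lemma sum_sign_mul_cons_comp (G : (Fin (j + 1) → α) → ℝ) (x : α) (q : Fin j → α) :
    ∑ σ : Perm (Fin (j + 1)), (Perm.sign σ : ℝ) * G (Fin.cons x q ∘ σ) =
      ∑ σ : Perm (Fin j), (Perm.sign σ : ℝ) * G (Fin.cons x (q ∘ σ)) -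
        ∑ l : Fin j, ∑ σ : Perm (Fin j),
          (Perm.sign σ : ℝ) * G (Fin.cons (q l) (update q l x ∘ σ)) := by
  rw [← Perm.decomposeFin.symm.sum_comp, Fintype.sum_prod_type, Fin.sum_univ_succ]
  simp [Perm.decomposeFin.symm_sign, Fin.cons_comp_decomposeFin_symm_zero,
    Fin.cons_comp_decomposeFin_symm_succ, Fin.succ_ne_zero, sub_eq_add_neg]

end Antisymmetrization

section Alternating

variable {n j : ℕ} {F : (Fin j → Fin n) → ℝ}

lemma IsAlt.sign_mul_apply_comp (hF : IsAlt F) (σ : Perm (Fin j)) (q : Fin j → Fin n) :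
    (Perm.sign σ : ℝ) * F (q ∘ σ) = F q := by
  rw [hF, ← mul_assoc, Perm.cast_sign_mul_self, one_mul]

lemma IsAlt.apply_comp_mul_apply_comp (hF : IsAlt F) (σ : Perm (Fin j)) (a b : Fin j → Fin n) :
    F (a ∘ σ) * F (b ∘ σ) = F a * F b := by
  rw [hF, hF, mul_mul_mul_comm, Perm.cast_sign_mul_self, one_mul]

lemma IsAlt.sum_mul_det_kroneckerMatrix_cons (hF : IsAlt F) (x y : Fin n) (q : Fin j → Fin n) :
    ∑ q' : Fin j → Fin n, F q' * (kroneckerMatrix (Fin.cons x q) (Fin.cons y q')).det =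
      j.factorial * ((if x = y then F q else 0) -
        ∑ l : Fin j, if q l = y then F (update q l x) else 0) := by
  let G : (Fin (j + 1) → Fin n) → ℝ := fun c => if c 0 = y then F (Fin.tail c) else 0
  have hG (c : Fin (j + 1) → Fin n) (s : ℝ) :
      ∑ q' : Fin j → Fin n, F q' * (if c = Fin.cons y q' then s else 0) = s * G c := by
    cases c using Fin.consCases with
    | cons c₀ c =>
      by_cases hc₀ : c₀ = y
      · simp [G, hc₀, mul_comm]
      · simp [G, hc₀]
  simp_rw [det_kroneckerMatrix_eq_sum, Finset.mul_sum]
  rw [Finset.sum_comm]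
  simp_rw [hG]
  rw [sum_sign_mul_cons_comp]
  simp only [G, Fin.cons_zero, Fin.tail_cons, mul_ite, mul_zero, hF.sign_mul_apply_comp]
  simp [Finset.sum_ite_irrel, Finset.card_univ, Fintype.card_perm, mul_sub, Finset.mul_sum,
    mul_ite]

lemma IsAlt.sum_ite_mul_update {F : (Fin (j + 1) → Fin n) → ℝ} (hF : IsAlt F) (l : Fin (j + 1))
    (x y : Fin n) :
    ∑ q : Fin (j + 1) → Fin n, (if q l = y then F q * F (update q l x) else 0) =
      ∑ w : Fin j → Fin n, F (Fin.cons y w) * F (Fin.cons x w) := by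
  -- substitute `q = Fin.cons z w ∘ swap 0 l`, which moves slot `l` to the front
  let s := swap (0 : Fin (j + 1)) l
  have hterm (z : Fin n) (w : Fin j → Fin n) :
      F (Fin.cons z w ∘ s) * F (update (Fin.cons z w ∘ s) l x) =
        F (Fin.cons z w) * F (Fin.cons x w) := by
    rw [show l = s.symm 0 by simp [s], ← update_comp_equiv, Fin.update_cons_zero,
      hF.apply_comp_mul_apply_comp]
  rw [← ((Fin.consEquiv fun _ => Fin n).trans (s.symm.arrowCongr (Equiv.refl _))).sum_comp,
    Fintype.sum_prod_type, Finset.sum_comm]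
  refine Finset.sum_congr rfl fun w _ => ?_
  change ∑ z, (if (Fin.cons z w ∘ s) l = y then
    F (Fin.cons z w ∘ s) * F (update (Fin.cons z w ∘ s) l x) else 0) = _
  simp only [hterm, comp_apply, s, swap_apply_right, Fin.cons_zero, Finset.sum_ite_eq',
    Finset.mem_univ, if_true]

lemma IsAlt.sum_mul_sum_ite_update (hF : IsAlt F) (x y : Fin n) :
    ∑ q : Fin j → Fin n, F q * ∑ l : Fin j, (if q l = y then F (update q l x) else 0) =
      j.factorial * formDot F x y := by
  cases j with
  | zero => simp [formDot]
  | succ j =>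
    simp_rw [Finset.mul_sum, mul_ite, mul_zero]
    rw [Finset.sum_comm]
    simp_rw [hF.sum_ite_mul_update]
    simp only [formDot, Finset.sum_const, Finset.card_univ, Fintype.card_fin, nsmul_eq_mul,
      Nat.factorial_succ, Nat.cast_mul, mul_comm (F (Fin.cons y _))]
    field_simp

lemma IsAlt.sum_sum_mul_det_kroneckerMatrix_cons (hF : IsAlt F) (x y : Fin n) :
    ∑ q : Fin j → Fin n, ∑ q' : Fin j → Fin n,
      F q * F q' * (kroneckerMatrix (Fin.cons x q) (Fin.cons y q')).det =
        j.factorial * j.factorial *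
          ((if x = y then 1 else 0) * formSq F - formDot F x y) := by
  simp_rw [mul_assoc, ← Finset.mul_sum, hF.sum_mul_det_kroneckerMatrix_cons]
  have hj : (j.factorial : ℝ) ≠ 0 := by positivity
  calc ∑ q, F q * (j.factorial * ((if x = y then F q else 0) -
          ∑ l, if q l = y then F (update q l x) else 0))
      = j.factorial * ((if x = y then 1 else 0) * ∑ q, F q * F q -
          ∑ q, F q * ∑ l, if q l = y then F (update q l x) else 0) := by
        simp_rw [mul_sub, Finset.sum_sub_distrib, Finset.mul_sum]
        congr 1
        · exact Finset.sum_congr rfl fun q _ => by split_ifs <;> ring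
        · exact Finset.sum_congr rfl fun q _ => Finset.sum_congr rfl fun l _ => by ring
    _ = _ := by
        rw [hF.sum_mul_sum_ite_update, formSq]
        field_simp

end Alternating

section HodgeStar

variable {n j u : ℕ}

lemma formDot_of_eq_zero {k : ℕ} (hk : k = 0) (G : (Fin k → Fin n) → ℝ) (m m' : Fin n) :
    formDot G m m' = 0 := by
  subst hk
  rfl

lemma formDot_of_eq_succ {k : ℕ} (hk : k = u + 1) (G : (Fin k → Fin n) → ℝ) (m m' : Fin n) :
    formDot G m m' = (1 / (u.factorial : ℝ)) *
      ∑ p : Fin u → Fin n, G (Fin.cons m p ∘ Fin.cast hk) * G (Fin.cons m' p ∘ Fin.cast hk) := by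
  subst hk
  rfl

lemma hodgeStar_cons_comp_cast (h : j ≤ n) (hu : n - j = u + 1) (hn : j + 1 + u = n)
    (F : (Fin j → Fin n) → ℝ) (m : Fin n) (p : Fin u → Fin n) :
    hodgeStar h F (Fin.cons m p ∘ Fin.cast hu) = (1 / (j.factorial : ℝ)) *
      ∑ q : Fin j → Fin n, leviCivita (Fin.append (Fin.snoc q m) p ∘ Fin.cast hn.symm) * F q := by
  unfold hodgeStar
  congr 2 with q
  congr 2
  ext x
  simp [Fin.append_right_cons]

lemma IsAlt.formDot_hodgeStar {F : (Fin j → Fin n) → ℝ} (hF : IsAlt F) (h : j ≤ n)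
    (m m' : Fin n) :
    formDot (hodgeStar h F) m m' = (if m = m' then 1 else 0) * formSq F - formDot F m m' := by
  have hcore := hF.sum_sum_mul_det_kroneckerMatrix_cons m m'
  have hj : (j.factorial : ℝ) ≠ 0 := by positivity
  rcases h.eq_or_lt with rfl | hlt
  · have hdet (q q' : Fin j → Fin j) :
        (kroneckerMatrix (Fin.cons m q) (Fin.cons m' q')).det = 0 :=
      det_kroneckerMatrix_eq_zero fun H => by simpa using Fintype.card_le_of_injective _ H.1
    simp only [hdet, mul_zero, Finset.sum_const_zero] at hcore
    rw [formDot_of_eq_zero (Nat.sub_self j),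
      (mul_eq_zero.mp hcore.symm).resolve_left (mul_ne_zero hj hj)]
  · obtain ⟨u, hu⟩ : ∃ u, n - j = u + 1 := ⟨n - j - 1, by omega⟩
    have hn : j + 1 + u = n := by omega
    have hu' : (u.factorial : ℝ) ≠ 0 := by positivity
    rw [formDot_of_eq_succ hu]
    simp_rw [hodgeStar_cons_comp_cast h hu hn]
    calc (1 / (u.factorial : ℝ)) * ∑ p : Fin u → Fin n,
          (1 / (j.factorial : ℝ) *
            ∑ q, leviCivita (Fin.append (Fin.snoc q m) p ∘ Fin.cast hn.symm) * F q) *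
          (1 / (j.factorial : ℝ) *
            ∑ q', leviCivita (Fin.append (Fin.snoc q' m') p ∘ Fin.cast hn.symm) * F q')
        = 1 / (j.factorial : ℝ) ^ 2 * ∑ q, ∑ q', F q * F q' * (1 / (u.factorial : ℝ) *
            ∑ p : Fin u → Fin n, leviCivita (Fin.append (Fin.snoc q m) p ∘ Fin.cast hn.symm) *
              leviCivita (Fin.append (Fin.snoc q' m') p ∘ Fin.cast hn.symm)) := by
          simp_rw [mul_mul_mul_comm (1 / (j.factorial : ℝ)), Finset.sum_mul_sum, Finset.mul_sum]
          rw [Finset.sum_comm]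
          refine Finset.sum_congr rfl fun q _ => ?_
          rw [Finset.sum_comm]
          exact Finset.sum_congr rfl fun q' _ => Finset.sum_congr rfl fun p _ => by ring
      _ = 1 / (j.factorial : ℝ) ^ 2 * ∑ q, ∑ q', F q * F q' *
            (kroneckerMatrix (Fin.cons m q) (Fin.cons m' q')).det := by
          simp_rw [sum_leviCivita_append_mul hn, det_kroneckerMatrix_snoc, one_div,
            inv_mul_cancel_left₀ hu']
      _ = _ := by
          rw [hcore]
          field_simp

end HodgeStar

lemma sum_sum_mul_formDot_nonneg {n k : ℕ} (G : (Fin k → Fin n) → ℝ) (X : Fin n → ℝ) :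
    0 ≤ ∑ m : Fin n, ∑ m' : Fin n, X m * X m' * formDot G m m' := by
  cases k with
  | zero => simp [formDot]
  | succ j =>
    have hsq : ∑ m : Fin n, ∑ m' : Fin n, X m * X m' * formDot G m m' =
        1 / (j.factorial : ℝ) * ∑ p : Fin j → Fin n, (∑ m, X m * G (Fin.cons m p)) ^ 2 := by
      simp_rw [sq, Finset.sum_mul_sum, Finset.mul_sum, formDot, Finset.mul_sum]
      rw [Finset.sum_congr rfl fun m _ => Finset.sum_comm, Finset.sum_comm]
      exact Finset.sum_congr rfl fun p _ => Finset.sum_congr rfl fun m _ =>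
        Finset.sum_congr rfl fun m' _ => by ring
    rw [hsq]
    positivity

theorem combStress_eq_and_posSemidef_general {n k d : ℕ}
    (h : k - d ≤ n)
    (fi : (Fin k → Fin n) → ℝ) (fe : (Fin (k - d) → Fin n) → ℝ)
    (hfe : IsAlt fe) :
    (∀ m m' : Fin n,
      formDot fi m m' - formDot fe m m' + (if m = m' then (1 : ℝ) else 0) * formSq fe
        = formDot fi m m' + formDot (hodgeStar h fe) m m')
    ∧ ∀ X : Fin n → ℝ,
        0 ≤ ∑ m : Fin n, ∑ m' : Fin n, X m * X m' *
          (formDot fi m m' - formDot fe m m'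
            + (if m = m' then (1 : ℝ) else 0) * formSq fe) := by
  have hstress (m m' : Fin n) :
      formDot fi m m' - formDot fe m m' + (if m = m' then (1 : ℝ) else 0) * formSq fe =
        formDot fi m m' + formDot (hodgeStar h fe) m m' := by
    rw [hfe.formDot_hodgeStar h]
    ring
  refine ⟨hstress, fun X => ?_⟩
  simp_rw [hstress, mul_add, Finset.sum_add_distrib]
  exact add_nonneg (sum_sum_mul_formDot_nonneg fi X) (sum_sum_mul_formDot_nonneg _ X)

/-- for a `k`-form `f_i` and a `(k−d)`-form `f_e` on an oriented
`n`-dimensional inner product space (components in an orthonormal frame, `g_{mn} = δ_{mn}`),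
the tensor `(f_i)_m·(f_i)_n − (f_e)_m·(f_e)_n + g_{mn} f_e²` equals
`(f_i)_m·(f_i)_n + (⋆f_e)_m·(⋆f_e)_n` and is therefore positive semidefinite. -/
theorem combStress_eq_and_posSemidef {n k d : ℕ} (hd : 1 ≤ d) (hdk : d ≤ k)
    (h : k - d ≤ n)
    (fi : (Fin k → Fin n) → ℝ) (fe : (Fin (k - d) → Fin n) → ℝ)
    (hfi : IsAlt fi) (hfe : IsAlt fe) :
    (∀ m m' : Fin n,
      formDot fi m m' - formDot fe m m' + (if m = m' then (1 : ℝ) else 0) * formSq fe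
        = formDot fi m m' + formDot (hodgeStar h fe) m m')
    ∧ ∀ X : Fin n → ℝ,
        0 ≤ ∑ m : Fin n, ∑ m' : Fin n, X m * X m' *
          (formDot fi m m' - formDot fe m m'
            + (if m = m' then (1 : ℝ) else 0) * formSq fe) :=
  combStress_eq_and_posSemidef_general h fi fe hfe
end
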